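/- Let u, r be binary relations on a set of arguments with r symmetric, su = u - u⁻¹, a = u ∪ r, d = u ∪ (r - u⁻¹). Then J_{su/a} = J_{su/d}. -/

import Mathlib

/-- The set of `x/y`-acceptable arguments with respect to `S`. -/
def Facc {Arg : Type*} (x y : Arg → Arg → Prop) (S : Set Arg) : Set Arg :=
  {A | ∀ B, x B A → ∃ C ∈ S, y C B}

theorem Facc_mono {Arg : Type*} (x y : Arg → Arg → Prop) : Monotone (Facc x y) := by
  intro S T hST A hA B hB
  obtain ⟨C, hC, hCB⟩ := hA B hB
  exact ⟨C, hST hC, hCB⟩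

/-- `Facc` as an order homomorphism. -/
def Fhom {Arg : Type*} (x y : Arg → Arg → Prop) : Set Arg →o Set Arg :=
  ⟨Facc x y, Facc_mono x y⟩

/-- The least-fixpoint argumentation semantics: the set of `x/y`-justified arguments. -/
def Jlfp {Arg : Type*} (x y : Arg → Arg → Prop) : Set Arg :=
  OrderHom.lfp (Fhom x y)

theorem Facc_Jlfp {Arg : Type*} (x y : Arg → Arg → Prop) : Facc x y (Jlfp x y) = Jlfp x y :=
  OrderHom.map_lfp (Fhom x y)

/-- A `y`-defeat that is not a `y'`-defeat does no harm when the defeated argument attacks the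
defender: the defender is justified, hence defended against it by a `y'`-defeat. -/
theorem Jlfp_subset_of_forall_or_attack {Arg : Type*} {x y y' : Arg → Arg → Prop}
    (h : ∀ C B, y C B → y' C B ∨ x B C) : Jlfp x y ⊆ Jlfp x y' := by
  refine OrderHom.lfp_le (Fhom x y) fun A hA => ?_
  rw [← Facc_Jlfp]
  intro B hBA
  obtain ⟨C, hC, hCB⟩ := hA B hBA
  rcases h C B hCB with hCB' | hBC
  · exact ⟨C, hC, hCB'⟩
  · rw [← Facc_Jlfp] at hC
    exact hC B hBC

theorem Jlfp_sua_sud_general {Arg : Type*} (u r su a d : Arg → Arg → Prop)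
    (hsu : ∀ A B, su A B ↔ u A B ∧ ¬ u B A)
    (ha : ∀ A B, a A B ↔ u A B ∨ r A B)
    (hd : ∀ A B, d A B ↔ u A B ∨ (r A B ∧ ¬ u B A)) :
    Jlfp su a = Jlfp su d := by
  refine (Jlfp_subset_of_forall_or_attack fun C B hCB => ?_).antisymm
    (Jlfp_subset_of_forall_or_attack fun C B hCB => ?_)
  · -- an `a`-defeat `C → B` that is not a `d`-defeat has `u B C ∧ ¬ u C B`, i.e. `su B C`
    rw [ha] at hCB
    rw [hd, hsu]
    tauto
  · rw [hd] at hCB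
    rw [ha]
    tauto

/-- `J_{su/a} = J_{su/d}` for symmetric rebut. -/
theorem Jlfp_sua_sud {Arg : Type*} (u r su a d : Arg → Arg → Prop)
    (hr : ∀ A B, r A B → r B A)
    (hsu : ∀ A B, su A B ↔ u A B ∧ ¬ u B A)
    (ha : ∀ A B, a A B ↔ u A B ∨ r A B)
    (hd : ∀ A B, d A B ↔ u A B ∨ (r A B ∧ ¬ u B A)) :
    Jlfp su a = Jlfp su d :=
  Jlfp_sua_sud_general u r su a d hsu ha hd
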